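/- arXiv:1707.02452 — 11 statements merged into one kernel-verified Lean document; each statement's English description precedes it below -/
import Mathlib

section
/- Let U = T_D and suppose an assignment of multiplicative variables M on U is given such that ⋃_{u ∈ U} C(u) = {w | deg(w) ≥ D}. Then for every index i, i ∈ M(D·e_i), i.e. the variable x_i is multiplicative for the pure power x_i^D. -/
/-- The degree of an exponent vector: the sum of the exponents. -/
def deg {n : ℕ} (u : Fin n → ℕ) : ℕ := ∑ i, u i

/-- The support of an exponent vector: the indices with nonzero exponent. -/
def supp {n : ℕ} (u : Fin n → ℕ) : Set (Fin n) := {i | u i ≠ 0}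

/-- Given an assignment `M` of multiplicative variables, the cone of `u` is the set
of all `u + v` where the support of `v` is contained in `M u`. -/
def cone {n : ℕ} (M : (Fin n → ℕ) → Set (Fin n)) (u : Fin n → ℕ) :
    Set (Fin n → ℕ) :=
  {w | ∃ v : Fin n → ℕ, supp v ⊆ M u ∧ w = u + v}

/-- If the union of the cones of the terms of `U = T_D` is `{w | deg w ≥ D}`,
then for every index `i`, the variable `x_i` is multiplicative for the pure
power `x_i^D` (whose exponent vector is `Pi.single i D`). -/
theorem purePower_mem_multiplicative (n D : ℕ) (hn : 1 ≤ n) (hD : 1 ≤ D)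
    (M : (Fin n → ℕ) → Set (Fin n))
    (hcov : (⋃ u ∈ {u : Fin n → ℕ | deg u = D}, cone M u) =
      {w : Fin n → ℕ | D ≤ deg w}) :
    ∀ i : Fin n, i ∈ M (Pi.single i D) := by
  intro i
  have hw : (Pi.single i (D + 1) : Fin n → ℕ) ∈ {w : Fin n → ℕ | D ≤ deg w} := by
    simp [deg, Finset.sum_pi_single]
  rw [← hcov] at hw
  simp only [Set.mem_iUnion] at hw
  obtain ⟨u, hu, v, hsupp, heq⟩ := hw
  have hj : ∀ j, j ≠ i → u j = 0 ∧ v j = 0 := by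
    intro j hji
    have := congrFun heq j
    simp [Pi.single_eq_of_ne hji] at this
    omega
  have hdeg : deg u = u i := by
    rw [deg, Finset.sum_eq_single i]
    · intro j _ hji; exact (hj j hji).1
    · simp
  have hui : u i = D := by rw [← hdeg]; exact hu
  have hvi : v i = 1 := by
    have := congrFun heq i
    simp at this
    omega
  have huD : u = Pi.single i D := by
    funext j
    by_cases hji : j = i
    · subst hji; simp [hui]
    · simp [Pi.single_eq_of_ne hji, (hj j hji).1]
  rw [← huD]
  exact hsupp (by simp [supp, hvi])
end

section
/- Let U = T_D and suppose an assignment of multiplicative variables M on U is given such that ⋃_{u ∈ U} C(u) = {w | deg(w) ≥ D}. Then there exists t ∈ U with M(t) equal to the full set of indices Fin n, i.e. a term for which all n variables are multiplicative. -/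
/-- If the union of the cones of the terms of `U = T_D` is `{w | deg w ≥ D}`,
then there exists `t ∈ U` for which all `n` variables are multiplicative. -/
theorem exists_term_all_multiplicative (n D : ℕ) (hn : 1 ≤ n) (hD : 1 ≤ D)
    (M : (Fin n → ℕ) → Set (Fin n))
    (hcov : (⋃ u ∈ {u : Fin n → ℕ | deg u = D}, cone M u) =
      {w : Fin n → ℕ | D ≤ deg w}) :
    ∃ t : Fin n → ℕ, deg t = D ∧ M t = Set.univ := by
  set w : Fin n → ℕ := fun _ => D + 1 with hw
  have hwdeg : D ≤ deg w := by
    have : deg w = n * (D + 1) := by simp [deg, hw, Finset.sum_const, mul_comm]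
    rw [this]
    calc D ≤ 1 * (D + 1) := by omega
    _ ≤ n * (D + 1) := Nat.mul_le_mul_right _ hn
  have hwmem : w ∈ (⋃ u ∈ {u : Fin n → ℕ | deg u = D}, cone M u) := by
    rw [hcov]; exact hwdeg
  simp only [Set.mem_iUnion, Set.mem_setOf_eq] at hwmem
  obtain ⟨u, hu, v, hv, huv⟩ := hwmem
  refine ⟨u, hu, ?_⟩
  ext i
  simp only [Set.mem_univ, iff_true]
  by_contra hi
  have hvi : v i = 0 := by
    by_contra h
    exact hi (hv h)
  have hui : u i ≤ deg u :=
    Finset.single_le_sum (f := u) (fun j _ => Nat.zero_le _) (Finset.mem_univ i)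
  have : w i = u i + v i := by rw [huv]; rfl
  simp [hw, hvi, hu] at this
  omega
end

section
/- Let U = T_D with an arbitrary assignment of multiplicative variables M on U, and let u, v ∈ U. Then C(u) ∩ C(v) ≠ ∅ if and only if lcm(u,v) ∈ C(u) ∩ C(v), where lcm(u,v) is the pointwise maximum of the exponent vectors u and v. -/
/-- For `u, v ∈ U = T_D` and an arbitrary assignment of multiplicative variables,
the cones of `u` and `v` intersect iff `lcm(u,v)` (the pointwise maximum `u ⊔ v`)
belongs to both cones. -/
theorem cones_intersect_iff_lcm_mem (n D : ℕ) (hn : 1 ≤ n) (hD : 1 ≤ D)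
    (M : (Fin n → ℕ) → Set (Fin n))
    (u v : Fin n → ℕ) (hu : deg u = D) (hv : deg v = D) :
    (cone M u ∩ cone M v).Nonempty ↔ (u ⊔ v) ∈ cone M u ∩ cone M v := by
  constructor
  · rintro ⟨w, ⟨a, ha, rfl⟩, ⟨b, hb, hab⟩⟩
    have key : ∀ i, u i + a i = v i + b i := fun i => congrFun hab i
    constructor
    · refine ⟨fun i => max (u i) (v i) - u i, ?_, ?_⟩
      · intro i hi
        apply ha
        simp only [supp, Set.mem_setOf_eq] at hi ⊢
        intro h
        apply hi
        have : v i ≤ u i := by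
          by_contra hc
          push_neg at hc
          have := key i
          omega
        omega
      · funext i
        simp only [Pi.sup_apply, Pi.add_apply]
        omega
    · refine ⟨fun i => max (u i) (v i) - v i, ?_, ?_⟩
      · intro i hi
        apply hb
        simp only [supp, Set.mem_setOf_eq] at hi ⊢
        intro h
        apply hi
        have : u i ≤ v i := by
          by_contra hc
          push_neg at hc
          have := key i
          omega
        omega
      · funext i
        simp only [Pi.sup_apply, Pi.add_apply]
        omega
  · exact fun h => ⟨u ⊔ v, h⟩
end

section
/- Let U = T_D and let L be a relative involutive division on U. Then there exists exactly one t ∈ U such that M(t) = Fin n, i.e. exactly one term of degree D for which all n variables are multiplicative. -/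
/-- Let `L` be a relative involutive division on `U = T_D` (the cones cover
`{w | deg w ≥ D}` and are pairwise disjoint). Then there exists exactly one
`t ∈ U` for which all `n` variables are multiplicative. -/
theorem existsUnique_term_all_multiplicative (n D : ℕ) (hn : 1 ≤ n) (hD : 1 ≤ D)
    (M : (Fin n → ℕ) → Set (Fin n))
    (hcov : (⋃ u ∈ {u : Fin n → ℕ | deg u = D}, cone M u) =
      {w : Fin n → ℕ | D ≤ deg w})
    (hdisj : ∀ u v : Fin n → ℕ, deg u = D → deg v = D → u ≠ v →
      cone M u ∩ cone M v = ∅) :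
    ∃! t : Fin n → ℕ, deg t = D ∧ M t = Set.univ := by
  -- The constant vector `w = fun _ => D+1` has degree `n*(D+1) ≥ D`.
  set w : Fin n → ℕ := fun _ => D + 1 with hw
  have hdegw : D ≤ deg w := by
    have : deg w = n * (D + 1) := by
      simp [deg, hw, Finset.sum_const, mul_comm]
    rw [this]
    calc D ≤ 1 * (D + 1) := by omega
      _ ≤ n * (D + 1) := Nat.mul_le_mul_right _ hn
  have hwmem : w ∈ ⋃ u ∈ {u : Fin n → ℕ | deg u = D}, cone M u := by
    rw [hcov]; exact hdegw
  simp only [Set.mem_iUnion, Set.mem_setOf_eq] at hwmem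
  obtain ⟨t, ht, hwt⟩ := hwmem
  obtain ⟨v, hv, hwv⟩ := hwt
  have hMt : M t = Set.univ := by
    apply Set.eq_univ_of_forall
    intro i
    apply hv
    have hti : t i ≤ D := by
      rw [← ht]
      exact Finset.single_le_sum (fun j _ => Nat.zero_le _) (Finset.mem_univ i)
    have : t i + v i = D + 1 := by
      have := congrFun hwv i
      simpa [hw] using this.symm
    simp only [supp, Set.mem_setOf_eq]
    omega
  refine ⟨t, ⟨ht, hMt⟩, ?_⟩
  rintro s ⟨hs, hMs⟩
  by_contra hne
  have h1 : (s + t) ∈ cone M s := ⟨t, by simp [hMs], rfl⟩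
  have h2 : (s + t) ∈ cone M t := ⟨s, by simp [hMt], by rw [add_comm]⟩
  have := hdisj s t hs ht hne
  exact absurd (Set.mem_inter h1 h2) (by rw [this]; exact Set.notMem_empty _)
end

section
/- Let U = T_D with an arbitrary assignment of multiplicative variables M on U, and let u, v ∈ U. Then the two inclusions {i | v(i) > u(i)} ⊆ M(u) and {i | u(i) > v(i)} ⊆ M(v) both hold if and only if C(u) ∩ C(v) ≠ ∅. (Here {i | v(i) > u(i)} is the support of v/gcd(u,v) and {i | u(i) > v(i)} is the support of u/gcd(u,v), where gcd is the pointwise minimum.) -/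
/-- For `u, v ∈ U = T_D` and an arbitrary assignment of multiplicative variables,
the inclusions `supp(v/gcd(u,v)) = {i | u i < v i} ⊆ M u` and
`supp(u/gcd(u,v)) = {i | v i < u i} ⊆ M v` both hold iff the cones of `u` and `v`
intersect. -/
theorem inclusions_iff_cones_intersect (n D : ℕ) (hn : 1 ≤ n) (hD : 1 ≤ D)
    (M : (Fin n → ℕ) → Set (Fin n))
    (u v : Fin n → ℕ) (hu : deg u = D) (hv : deg v = D) :
    ({i : Fin n | u i < v i} ⊆ M u ∧ {i : Fin n | v i < u i} ⊆ M v) ↔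
      (cone M u ∩ cone M v).Nonempty := by
  constructor
  · rintro ⟨h1, h2⟩
    refine ⟨fun i => max (u i) (v i), ⟨fun i => v i - u i, ?_, ?_⟩, fun i => u i - v i, ?_, ?_⟩
    · intro i hi
      exact h1 (by simpa [supp, Nat.sub_ne_zero_iff_lt] using hi)
    · funext i; simp [Pi.add_apply]; omega
    · intro i hi
      exact h2 (by simpa [supp, Nat.sub_ne_zero_iff_lt] using hi)
    · funext i; simp [Pi.add_apply]; omega
  · rintro ⟨w, ⟨a, ha, rfl⟩, b, hb, hab⟩
    have key : ∀ i, u i + a i = v i + b i := fun i => congrFun hab i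
    constructor
    · intro i hi
      exact ha (show a i ≠ 0 by have := key i; simp at hi ⊢; omega)
    · intro i hi
      exact hb (show b i ≠ 0 by have := key i; simp at hi ⊢; omega)
end

section
/- Let U = T_D with an assignment of multiplicative variables M on U such that the cones C(u), u ∈ U, are pairwise disjoint, and such that for every natural number d, ∑_{k=1}^{n} a_k · C(d+k-1, k-1) = C(D+d+n-1, n-1), where a_k is the number of u ∈ U with |M(u)| = k and C(a,b) denotes the binomial coefficient. Then ⋃_{u ∈ U} C(u) = {w | deg(w) ≥ D}; hence M is a relative involutive division on U. -/
/-- Sum of multichoose identity (hockey stick). -/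
lemma sum_multichoose_aux (k m : ℕ) :
    ∑ j ∈ Finset.range (m + 1), Nat.multichoose k j = Nat.multichoose (k + 1) m := by
  induction m with
  | zero => simp
  | succ m ih =>
      rw [Finset.sum_range_succ, ih, Nat.multichoose_succ_succ, Nat.add_comm]

/-- Stars and bars for `Finset.piAntidiag`. -/
lemma card_piAntidiag {ι : Type*} [DecidableEq ι] (s : Finset ι) (d : ℕ) :
    (s.piAntidiag d).card = Nat.multichoose s.card d := by
  induction s using Finset.cons_induction generalizing d with
  | empty =>
      rcases Nat.eq_zero_or_pos d with rfl | hd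
      · simp
      · obtain ⟨d', rfl⟩ : ∃ d', d = d' + 1 := ⟨d - 1, by omega⟩
        rw [Finset.piAntidiag_empty_of_ne_zero (by omega)]
        simp [Nat.multichoose_zero_succ]
  | cons i s hi ih =>
      rw [Finset.piAntidiag_cons hi, Finset.card_disjiUnion]
      simp only [Finset.card_map, ih]
      rw [Finset.Nat.sum_antidiagonal_eq_sum_range_succ_mk]
      simp only []
      have : ∑ j ∈ Finset.range (d + 1), Nat.multichoose s.card (d - j)
          = ∑ j ∈ Finset.range (d + 1), Nat.multichoose s.card j := by
        rw [← Finset.sum_range_reflect]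
        apply Finset.sum_congr rfl
        intro j hj
        congr 1
        simp only [Finset.mem_range] at hj
        omega
      rw [this, sum_multichoose_aux, Finset.card_cons]

lemma multichoose_eq_choose (k d : ℕ) (hk : 1 ≤ k) :
    Nat.multichoose k d = (d + k - 1).choose (k - 1) := by
  rw [Nat.multichoose_eq]
  have h1 : k + d - 1 = (k - 1) + d := by omega
  have h2 : d + k - 1 = (k - 1) + d := by omega
  rw [h1, h2]
  exact Nat.choose_symm_of_eq_add (by omega)

/-- Suppose the cones of `U = T_D` are pairwise disjoint and, for each `d`,
`∑_{k=1}^{n} a_k · C(d+k-1, k-1) = C(D+d+n-1, n-1)`, where `a_k` is the number of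
`u ∈ U` with exactly `k` multiplicative variables. Then the union of the cones is
`{w | deg w ≥ D}`, hence `M` is a relative involutive division on `U`. -/
theorem disjoint_and_count_implies_cover (n D : ℕ) (hn : 1 ≤ n) (hD : 1 ≤ D)
    (M : (Fin n → ℕ) → Set (Fin n))
    (hdisj : ∀ u v : Fin n → ℕ, deg u = D → deg v = D → u ≠ v →
      cone M u ∩ cone M v = ∅)
    (hcount : ∀ d : ℕ,
      ∑ k ∈ Finset.Icc 1 n,
        Set.ncard {u : Fin n → ℕ | deg u = D ∧ (M u).ncard = k} *
          Nat.choose (d + k - 1) (k - 1) =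
        Nat.choose (D + d + n - 1) (n - 1)) :
    (⋃ u ∈ {u : Fin n → ℕ | deg u = D}, cone M u) =
      {w : Fin n → ℕ | D ≤ deg w} := by
  classical
  -- degree is additive
  have deg_add : ∀ u v : Fin n → ℕ, deg (u + v) = deg u + deg v := by
    intro u v
    simpa [deg] using Finset.sum_add_distrib
  -- the finset of monomials of degree m
  set T : ℕ → Finset (Fin n → ℕ) := fun m => (Finset.univ : Finset (Fin n)).piAntidiag m
    with hTdef
  have memT : ∀ m (w : Fin n → ℕ), w ∈ T m ↔ deg w = m := by
    intro m w
    simp [hTdef, deg, Finset.mem_piAntidiag]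
  have cardT : ∀ m, (T m).card = Nat.multichoose n m := by
    intro m
    rw [hTdef]
    simp [card_piAntidiag]
  -- the multiplicative variables as a finset
  set Ms : (Fin n → ℕ) → Finset (Fin n) := fun u => (M u).toFinite.toFinset with hMsdef
  have hMs_mem : ∀ u i, i ∈ Ms u ↔ i ∈ M u := by
    intro u i; rw [hMsdef]; exact (M u).toFinite.mem_toFinset
  have hMs_card : ∀ u, (Ms u).card = (M u).ncard := by
    intro u
    rw [Set.ncard_eq_toFinset_card (M u) ((M u).toFinite)]
  -- the truncated cone, as a finset
  set C : (Fin n → ℕ) → ℕ → Finset (Fin n → ℕ) :=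
    fun u d => ((Ms u).piAntidiag d).image (u + ·) with hCdef
  have memC : ∀ u d w, w ∈ C u d ↔
      ∃ v : Fin n → ℕ, supp v ⊆ M u ∧ deg v = d ∧ w = u + v := by
    intro u d w
    simp only [hCdef, Finset.mem_image, Finset.mem_piAntidiag]
    constructor
    · rintro ⟨v, ⟨hsum, hsupp⟩, rfl⟩
      refine ⟨v, ?_, ?_, rfl⟩
      · intro i hi
        exact (hMs_mem u i).1 (hsupp i hi)
      · rw [deg, ← hsum]
        symm
        apply Finset.sum_subset (Finset.subset_univ _)
        intro i _ hi
        by_contra h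
        exact hi (hsupp i h)
    · rintro ⟨v, hsupp, hdeg, rfl⟩
      refine ⟨v, ⟨?_, ?_⟩, rfl⟩
      · rw [← hdeg, deg]
        apply Finset.sum_subset (Finset.subset_univ _)
        intro i _ hi
        by_contra h
        exact hi ((hMs_mem u i).2 (hsupp h))
      · intro i hi
        exact (hMs_mem u i).2 (hsupp hi)
  have subC : ∀ u d w, w ∈ C u d → w ∈ cone M u := by
    intro u d w hw
    obtain ⟨v, h1, _, h3⟩ := (memC u d w).1 hw
    exact ⟨v, h1, h3⟩
  have degC : ∀ u d w, w ∈ C u d → deg w = deg u + d := by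
    intro u d w hw
    obtain ⟨v, _, h2, h3⟩ := (memC u d w).1 hw
    rw [h3, deg_add, h2]
  have coneC : ∀ u d w, w ∈ cone M u → deg w = deg u + d → w ∈ C u d := by
    intro u d w hw hdeg
    obtain ⟨v, h1, rfl⟩ := hw
    rw [deg_add] at hdeg
    exact (memC u d _).2 ⟨v, h1, by omega, rfl⟩
  have cardC : ∀ u d, (C u d).card = Nat.multichoose ((M u).ncard) d := by
    intro u d
    rw [hCdef]
    rw [Finset.card_image_of_injective _ (add_right_injective u), card_piAntidiag, hMs_card]
  -- the counts a_k
  set a : ℕ → ℕ := fun k => ((T D).filter (fun u => (M u).ncard = k)).card with hadef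
  have ha : ∀ k, a k = Set.ncard {u : Fin n → ℕ | deg u = D ∧ (M u).ncard = k} := by
    intro k
    have hak : a k = ((T D).filter (fun u => (M u).ncard = k)).card := rfl
    rw [hak, ← Set.ncard_coe_finset]
    congr 1
    ext u
    simp only [Finset.coe_filter, Set.mem_setOf_eq, memT D u]
  -- grouping the sum over T D by the number of multiplicative variables
  have key : ∀ d, ∑ u ∈ T D, Nat.multichoose ((M u).ncard) d
      = ∑ k ∈ Finset.range (n + 1), a k * Nat.multichoose k d := by
    intro d
    rw [← Finset.sum_fiberwise_of_maps_to (g := fun u => (M u).ncard)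
      (t := Finset.range (n + 1)) (fun u _ => by
        simp only [Finset.mem_range]
        have : (Ms u).card ≤ n := by
          simpa using Finset.card_le_card (Finset.subset_univ (Ms u))
        rw [hMs_card] at this
        omega) (fun u => Nat.multichoose ((M u).ncard) d)]
    apply Finset.sum_congr rfl
    intro k _
    rw [hadef]
    rw [Finset.sum_congr rfl (fun u hu => by
      rw [(Finset.mem_filter.1 hu).2])]
    rw [Finset.sum_const, smul_eq_mul]
  -- the counting hypothesis in terms of multichoose
  have htotal : ∀ d, ∑ k ∈ Finset.Icc 1 n, a k * Nat.multichoose k d = (T (D + d)).card := by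
    intro d
    rw [cardT, multichoose_eq_choose n (D + d) hn, ← hcount d]
    apply Finset.sum_congr rfl
    intro k hk
    rw [Finset.mem_Icc] at hk
    rw [ha, multichoose_eq_choose k d hk.1]
  -- splitting off the k = 0 term
  have hsplit : ∀ d, ∑ k ∈ Finset.range (n + 1), a k * Nat.multichoose k d
      = a 0 * Nat.multichoose 0 d + ∑ k ∈ Finset.Icc 1 n, a k * Nat.multichoose k d := by
    intro d
    have : Finset.range (n + 1) = insert 0 (Finset.Icc 1 n) := by
      ext k
      simp [Finset.mem_range, Finset.mem_Icc, Finset.mem_insert]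
      omega
    rw [this, Finset.sum_insert (by simp)]
  -- a 0 = 0
  have ha0 : a 0 = 0 := by
    have h1 := htotal 0
    have h2 := key 0
    have h3 := hsplit 0
    simp only [Nat.multichoose_zero_right, Nat.mul_one] at h1 h2 h3
    have h4 : ∑ u ∈ T D, 1 = (T D).card := by simp
    rw [h4] at h2
    rw [Nat.add_zero] at h1
    omega
  -- the cones of degree D + d cover T (D + d)
  have cover : ∀ d, (T D).biUnion (fun u => C u d) = T (D + d) := by
    intro d
    apply Finset.eq_of_subset_of_card_le
    · intro w hw
      rw [Finset.mem_biUnion] at hw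
      obtain ⟨u, hu, hw⟩ := hw
      rw [memT]
      rw [degC u d w hw, (memT D u).1 hu]
    · have hdisjF : ∀ u ∈ T D, ∀ v ∈ T D, u ≠ v → Disjoint (C u d) (C v d) := by
        intro u hu v hv huv
        rw [Finset.disjoint_left]
        intro w hwu hwv
        have : w ∈ cone M u ∩ cone M v := ⟨subC u d w hwu, subC v d w hwv⟩
        rw [hdisj u v ((memT D u).1 hu) ((memT D v).1 hv) huv] at this
        exact this
      rw [Finset.card_biUnion hdisjF]
      refine le_of_eq ?_
      calc (T (D + d)).card
          = ∑ k ∈ Finset.Icc 1 n, a k * Nat.multichoose k d := (htotal d).symm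
        _ = ∑ k ∈ Finset.range (n + 1), a k * Nat.multichoose k d := by
            rw [hsplit d, ha0]; omega
        _ = ∑ u ∈ T D, Nat.multichoose ((M u).ncard) d := (key d).symm
        _ = ∑ u ∈ T D, (C u d).card := by
            exact Finset.sum_congr rfl (fun u _ => (cardC u d).symm)
  -- conclusion
  ext w
  simp only [Set.mem_iUnion, Set.mem_setOf_eq, exists_prop]
  constructor
  · rintro ⟨u, hu, v, _, rfl⟩
    rw [deg_add, hu]
    omega
  · intro hw
    have hwT : w ∈ T (D + (deg w - D)) := by
      rw [memT]
      omega
    rw [← cover (deg w - D), Finset.mem_biUnion] at hwT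
    obtain ⟨u, hu, hw'⟩ := hwT
    exact ⟨u, (memT D u).1 hu, subC u _ w hw'⟩
end

section
/- Let U = T_D and let L be a relative involutive division on U such that the multiplicative sets form a chain: for all u, v ∈ U, either M(u) ⊆ M(v) or M(v) ⊆ M(u). Then the (unique) term t ∈ U with M(t) = Fin n is a pure power: t = D·e_i for some index i. -/
/-- Let `L` be a relative involutive division on `U = T_D` whose multiplicative
sets form a chain under inclusion. Then any term `t ∈ U` with all variables
multiplicative is a pure power `x_i^D`, i.e. `t = Pi.single i D` for some `i`. -/
theorem chain_peak_is_purePower (n D : ℕ) (hn : 1 ≤ n) (hD : 1 ≤ D)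
    (M : (Fin n → ℕ) → Set (Fin n))
    (hcov : (⋃ u ∈ {u : Fin n → ℕ | deg u = D}, cone M u) =
      {w : Fin n → ℕ | D ≤ deg w})
    (hdisj : ∀ u v : Fin n → ℕ, deg u = D → deg v = D → u ≠ v →
      cone M u ∩ cone M v = ∅)
    (hchain : ∀ u v : Fin n → ℕ, deg u = D → deg v = D →
      M u ⊆ M v ∨ M v ⊆ M u) :
    ∀ t : Fin n → ℕ, deg t = D → M t = Set.univ →
      ∃ i : Fin n, t = Pi.single i D := by
  intro t ht htM
  -- the support of `t` is nonempty
  have hne : ∃ i, t i ≠ 0 := by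
    by_contra h
    push_neg at h
    have : deg t = 0 := Finset.sum_eq_zero (fun i _ => h i)
    omega
  obtain ⟨i, hi⟩ := hne
  by_cases hone : ∀ k, t k ≠ 0 → k = i
  · -- single support: pure power
    refine ⟨i, funext fun k => ?_⟩
    by_cases hk : k = i
    · subst hk
      have hsum : ∑ b, t b = t k := by
        apply Finset.sum_eq_single
        · intro b _ hb
          by_contra h
          exact hb (hone b h)
        · intro h; exact absurd (Finset.mem_univ k) h
      have : t k = D := by rw [← ht]; simp [deg, hsum]
      simp [this]
    · have h0 : t k = 0 := by
        by_contra h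
        exact hk (hone k h)
      rw [Pi.single_eq_of_ne hk, h0]
  · push_neg at hone
    obtain ⟨j, hj, hji⟩ := hone
    exfalso
    -- Lemma A: no other element of U has all of supp t multiplicative
    have hA : ∀ u : Fin n → ℕ, deg u = D → u ≠ t → ¬ supp t ⊆ M u := by
      intro u hu hut hsub
      have h1 : (t + u) ∈ cone M u := ⟨t, hsub, by rw [add_comm]⟩
      have h2 : (t + u) ∈ cone M t := ⟨u, by rw [htM]; exact Set.subset_univ _, rfl⟩
      have hd := hdisj u t hu ht hut
      have : (t + u) ∈ cone M u ∩ cone M t := ⟨h1, h2⟩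
      rw [hd] at this
      exact this
    -- Lemma B
    have hB : ∀ j' i' : Fin n, t j' ≠ 0 → t i' ≠ 0 → i' ≠ j' →
        ∃ u, deg u = D ∧ u ≠ t ∧ ∀ k, t k ≠ 0 → k ≠ j' → k ∈ M u := by
      intro j' i' hj' hi' hij'
      set w : Fin n → ℕ := fun k => if k = j' then t j' - 1 else t k + D with hw
      have hwdeg : D ≤ deg w := by
        have h1 : w i' = t i' + D := by simp [hw, hij']
        have h2 : w i' ≤ deg w :=
          Finset.single_le_sum (f := w) (fun k _ => Nat.zero_le _) (Finset.mem_univ i')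
        omega
      have hwmem : w ∈ (⋃ u ∈ {u : Fin n → ℕ | deg u = D}, cone M u) := by
        rw [hcov]; exact hwdeg
      simp only [Set.mem_iUnion, Set.mem_setOf_eq, cone] at hwmem
      obtain ⟨u, hu, v, hv, hwv⟩ := hwmem
      refine ⟨u, hu, ?_, ?_⟩
      · intro h
        subst h
        have := congrFun hwv j'
        simp only [hw, Pi.add_apply, if_pos rfl] at this
        omega
      · intro k hk hkj
        have hk1 : w k = u k + v k := congrFun hwv k ▸ rfl
        have hk2 : w k = t k + D := by simp [hw, hkj]
        have huk : u k ≤ D := by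
          have h3 : u k ≤ ∑ b, u b :=
            Finset.single_le_sum (f := u) (fun b _ => Nat.zero_le _) (Finset.mem_univ k)
          simp only [deg] at hu
          omega
        have hvk : v k ≠ 0 := by omega
        exact hv hvk
    obtain ⟨u1, hu1, hu1t, hM1⟩ := hB j i hj hi (Ne.symm hji)
    obtain ⟨u2, hu2, hu2t, hM2⟩ := hB i j hi hj hji
    rcases hchain u1 u2 hu1 hu2 with hc | hc
    · apply hA u2 hu2 hu2t
      intro k hk
      have hk' : t k ≠ 0 := hk
      by_cases hkj : k = j
      · subst hkj
        exact hM2 _ hk' hji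
      · exact hc (hM1 k hk' hkj)
    · apply hA u1 hu1 hu1t
      intro k hk
      have hk' : t k ≠ 0 := hk
      by_cases hki : k = i
      · subst hki
        exact hM1 _ hk' (Ne.symm hji)
      · exact hc (hM2 k hk' hki)
end

section
/- Let U = T_D and let L be a relative involutive division on U such that the multiplicative sets form a chain: for all u, v ∈ U, either M(u) ⊆ M(v) or M(v) ⊆ M(u). Then there exists a permutation σ of Fin n such that L coincides with the Pommaret division for the variable ordering x_{σ(1)} < x_{σ(2)} < ... < x_{σ(n)}; that is, for every u ∈ U, M(u) = { σ(i) | i ≤ j_u }, where j_u is the least index j such that u(σ(j)) ≠ 0. -/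
lemma deg_add {n : ℕ} (u v : Fin n → ℕ) : deg (u + v) = deg u + deg v := by
  simp [deg, Finset.sum_add_distrib]

lemma deg_single {n : ℕ} (k : Fin n) (d : ℕ) : deg (Pi.single k d) = d := by
  simp [deg]

lemma supp_single_subset {n : ℕ} (k : Fin n) (d : ℕ) :
    supp (Pi.single k d) ⊆ {k} := by
  intro i hi
  by_contra h
  simp only [Set.mem_singleton_iff] at h
  exact hi (by simp [h])

lemma supp_add_subset {n : ℕ} (u v : Fin n → ℕ) :
    supp (u + v) ⊆ supp u ∪ supp v := by
  intro i hi
  by_contra h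
  simp only [Set.mem_union, supp, Set.mem_setOf_eq, not_or, not_not] at h
  exact hi (by simp [h.1, h.2])

lemma coord_le_deg {n : ℕ} (u : Fin n → ℕ) (i : Fin n) : u i ≤ deg u :=
  Finset.single_le_sum (fun _ _ => Nat.zero_le _) (Finset.mem_univ i)

lemma pair_le_deg {n : ℕ} (u : Fin n → ℕ) {i j : Fin n} (h : i ≠ j) :
    u i + u j ≤ deg u := by
  have : deg u = u i + ∑ x ∈ Finset.univ.erase i, u x := by
    rw [deg, ← Finset.add_sum_erase _ _ (Finset.mem_univ i)]
  rw [this]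
  exact Nat.add_le_add_left
    (Finset.single_le_sum (fun _ _ => Nat.zero_le _)
      (Finset.mem_erase.mpr ⟨Ne.symm h, Finset.mem_univ j⟩)) _

lemma eq_single_of_deg_eq {n : ℕ} {u : Fin n → ℕ} {k : Fin n}
    (h : deg u = u k) : u = Pi.single k (u k) := by
  funext i
  rcases eq_or_ne i k with rfl | hik
  · simp
  · rw [Pi.single_eq_of_ne hik]
    by_contra hne
    have h2 : u k + u i ≤ deg u := pair_le_deg u (Ne.symm hik)
    omega

lemma deg_eq_one {n : ℕ} {v : Fin n → ℕ} (h : deg v = 1) :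
    ∃ m, v = Pi.single m 1 := by
  have hne : ∃ m, v m ≠ 0 := by
    by_contra hc
    push_neg at hc
    have : deg v = 0 := Finset.sum_eq_zero (fun i _ => hc i)
    omega
  obtain ⟨m, hm⟩ := hne
  have h1 : v m ≤ 1 := h ▸ coord_le_deg v m
  have h2 : v m = 1 := by omega
  refine ⟨m, ?_⟩
  have := eq_single_of_deg_eq (u := v) (k := m) (by omega)
  rw [h2] at this; exact this
lemma aux (n : ℕ) (hn : 1 ≤ n) :
    ∀ C : ℕ, ∀ A : Finset (Fin n), A.card = C → ∀ D : ℕ, 1 ≤ D →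
    ∀ M : (Fin n → ℕ) → Set (Fin n),
    (∀ w : Fin n → ℕ, supp w ⊆ ↑A → D ≤ deg w →
       ∃ u v, deg u = D ∧ supp u ⊆ ↑A ∧ supp v ⊆ M u ∩ ↑A ∧ w = u + v) →
    (∀ u₁ u₂ : Fin n → ℕ, deg u₁ = D → supp u₁ ⊆ ↑A → deg u₂ = D → supp u₂ ⊆ ↑A →
       u₁ ≠ u₂ → ∀ v₁ v₂, supp v₁ ⊆ M u₁ ∩ ↑A → supp v₂ ⊆ M u₂ ∩ ↑A →
       u₁ + v₁ ≠ u₂ + v₂) →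
    (∀ u₁ u₂ : Fin n → ℕ, deg u₁ = D → supp u₁ ⊆ ↑A → deg u₂ = D → supp u₂ ⊆ ↑A →
       M u₁ ∩ ↑A ⊆ M u₂ ∩ ↑A ∨ M u₂ ∩ ↑A ⊆ M u₁ ∩ ↑A) →
    ∃ e : ℕ → Fin n,
      (∀ i, i < C → ∀ j, j < C → e i = e j → i = j) ∧
      (∀ x, x ∈ A ↔ ∃ i, i < C ∧ e i = x) ∧
      (∀ u : Fin n → ℕ, deg u = D → supp u ⊆ ↑A → ∀ j, j < C →
         (u (e j) ≠ 0 ∧ ∀ i, i < j → u (e i) = 0) →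
         M u ∩ ↑A = {x : Fin n | ∃ i ≤ j, x = e i}) := by
  intro C
  induction C using Nat.strong_induction_on with
  | _ C IH =>
  rcases C with _ | c
  · intro A hA D hD M cov disj chain
    refine ⟨fun _ => ⟨0, hn⟩, ?_, ?_, ?_⟩
    · omega
    · intro x
      constructor
      · intro hx
        rw [Finset.card_eq_zero] at hA
        simp [hA] at hx
      · rintro ⟨i, hi, -⟩; omega
    · omega
  · intro A hA D hD M cov disj chain
    classical
    set P : Fin n → (Fin n → ℕ) := fun k => Pi.single k D with hP
    have hdegP : ∀ k, deg (P k) = D := by intro k; simp only [hP]; exact deg_single k D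
    have hsuppP : ∀ k, supp (P k) ⊆ {k} := by intro k; simp only [hP]; exact supp_single_subset k D
    have hPk : ∀ k, P k k = D := by intro k; simp [hP]
    have hPne : ∀ k l : Fin n, k ≠ l → P k ≠ P l := by
      intro k l hkl he
      have h := congrFun he k
      rw [hPk] at h
      simp only [hP, Pi.single_apply, if_neg hkl] at h
      omega
    have hsuppPA : ∀ k ∈ A, supp (P k) ⊆ (↑A : Set (Fin n)) := by
      intro k hk i hi
      have h := hsuppP k hi
      simp only [Set.mem_singleton_iff] at h
      subst h; exact hk
    have h1 : ∀ k ∈ A, k ∈ M (P k) ∩ (↑A : Set (Fin n)) := by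
      intro k hk
      obtain ⟨u, v, hdu, hsu, hsv, hw⟩ := cov (Pi.single k (D+1))
        (fun i hi => by
          have h := supp_single_subset k (D+1) hi
          simp only [Set.mem_singleton_iff] at h
          subst h; exact hk)
        (by rw [deg_single]; omega)
      have hdv : deg v = 1 := by
        have h := deg_add u v
        rw [← hw, deg_single, hdu] at h
        omega
      obtain ⟨m, rfl⟩ := deg_eq_one hdv
      have hmk : m = k := by
        by_contra hmk
        have h := congrFun hw m
        simp only [Pi.add_apply, Pi.single_eq_same, Pi.single_apply, if_neg hmk] at h
        omega
      subst hmk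
      have huP : u = P m := by
        funext i
        have hi := congrFun hw i
        simp only [Pi.add_apply] at hi
        rcases eq_or_ne i m with rfl | hik
        · simp only [Pi.single_eq_same] at hi
          simp only [hP, Pi.single_eq_same]
          omega
        · simp only [Pi.single_apply, if_neg hik] at hi
          simp only [hP, Pi.single_apply, if_neg hik]
          omega
      have hm : m ∈ supp (Pi.single m 1) := by
        simp [supp]
      rw [huP] at hsv
      exact hsv hm
    have h2 : ∀ k ∈ A, ∀ l ∈ A, k ≠ l →
        M (P k) ∩ (↑A : Set (Fin n)) ≠ M (P l) ∩ ↑A := by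
      intro k hk l hl hkl he
      refine disj (P k) (P l) (hdegP k) (hsuppPA k hk) (hdegP l) (hsuppPA l hl)
        (hPne k l hkl) (P l) (P k) ?_ ?_ (add_comm (P k) (P l))
      · intro i hi
        have h := hsuppP l hi
        simp only [Set.mem_singleton_iff] at h
        subst h
        rw [he]
        exact h1 i hl
      · intro i hi
        have h := hsuppP k hi
        simp only [Set.mem_singleton_iff] at h
        subst h
        rw [← he]
        exact h1 i hk
    set B : Fin n → Finset (Fin n) := fun k => A.filter (fun x => x ∈ M (P k)) with hBdef
    have hB : ∀ k, (↑(B k) : Set (Fin n)) = M (P k) ∩ ↑A := by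
      intro k; ext x
      simp only [hBdef, Finset.coe_filter, Set.mem_setOf_eq, Set.mem_inter_iff,
        Finset.mem_coe]
      tauto
    have hBsub : ∀ k, B k ⊆ A := fun k => Finset.filter_subset _ _
    have hkBk : ∀ k ∈ A, k ∈ B k := by
      intro k hk
      have h := h1 k hk
      rw [← hB] at h
      exact h
    have hchainB : ∀ k ∈ A, ∀ l ∈ A, B k ⊆ B l ∨ B l ⊆ B k := by
      intro k hk l hl
      rcases chain (P k) (P l) (hdegP k) (hsuppPA k hk) (hdegP l) (hsuppPA l hl) with h | h
      · left; rw [← Finset.coe_subset, hB, hB]; exact h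
      · right; rw [← Finset.coe_subset, hB, hB]; exact h
    have hBinj : ∀ k ∈ A, ∀ l ∈ A, (B k).card = (B l).card → k = l := by
      intro k hk l hl hcard
      by_contra hkl
      have hne := h2 k hk l hl hkl
      rw [← hB, ← hB] at hne
      rcases hchainB k hk l hl with h | h
      · exact hne (by rw [Finset.eq_of_subset_of_card_le h (le_of_eq hcard.symm)])
      · exact hne (by rw [Finset.eq_of_subset_of_card_le h (le_of_eq hcard)])
    have hcard_mem : ∀ k ∈ A, (B k).card ∈ Finset.Icc 1 (c+1) := by
      intro k hk
      simp only [Finset.mem_Icc]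
      refine ⟨Finset.card_pos.mpr ⟨k, hkBk k hk⟩, ?_⟩
      calc (B k).card ≤ A.card := Finset.card_le_card (hBsub k)
        _ = c + 1 := hA
    have himg : A.image (fun k => (B k).card) = Finset.Icc 1 (c+1) := by
      apply Finset.eq_of_subset_of_card_le
      · intro b hb
        obtain ⟨k, hk, rfl⟩ := Finset.mem_image.mp hb
        exact hcard_mem k hk
      · rw [Nat.card_Icc, Finset.card_image_of_injOn (fun k hk l hl => hBinj k hk l hl), hA]
        omega
    have hsurj : ∀ b, 1 ≤ b → b ≤ c + 1 → ∃ k ∈ A, (B k).card = b := by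
      intro b h1b h2b
      have hb : b ∈ Finset.Icc 1 (c+1) := Finset.mem_Icc.mpr ⟨h1b, h2b⟩
      rw [← himg] at hb
      obtain ⟨k, hk, hbk⟩ := Finset.mem_image.mp hb
      exact ⟨k, hk, hbk⟩
    have hflag : ∀ u : Fin n → ℕ, deg u = D → supp u ⊆ (↑A : Set (Fin n)) →
        M u ∩ ↑A = ∅ ∨ ∃ k ∈ A, M u ∩ ↑A = ↑(B k) := by
      intro u hdu hsu
      set X : Finset (Fin n) := A.filter (fun x => x ∈ M u) with hXdef
      have hX : (↑X : Set (Fin n)) = M u ∩ ↑A := by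
        ext x
        simp only [hXdef, Finset.coe_filter, Set.mem_setOf_eq, Set.mem_inter_iff,
          Finset.mem_coe]
        tauto
      rcases eq_or_ne X ∅ with hXe | hXne
      · left; rw [← hX, hXe]; simp
      · right
        have hX1 : 1 ≤ X.card := Finset.card_pos.mpr (Finset.nonempty_of_ne_empty hXne)
        have hXle : X.card ≤ c + 1 := by
          calc X.card ≤ A.card := Finset.card_le_card (Finset.filter_subset _ _)
            _ = c + 1 := hA
        obtain ⟨k, hk, hbk⟩ := hsurj X.card hX1 hXle
        refine ⟨k, hk, ?_⟩
        have hcomp : X ⊆ B k ∨ B k ⊆ X := by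
          rcases chain u (P k) hdu hsu (hdegP k) (hsuppPA k hk) with h | h
          · left; rw [← Finset.coe_subset, hX, hB]; exact h
          · right; rw [← Finset.coe_subset, hX, hB]; exact h
        have hXB : X = B k := by
          rcases hcomp with h | h
          · exact Finset.eq_of_subset_of_card_le h (le_of_eq hbk)
          · exact (Finset.eq_of_subset_of_card_le h (le_of_eq hbk.symm)).symm
        rw [← hX, hXB]
    obtain ⟨τ, hτA, hτcard⟩ := hsurj (c+1) (by omega) le_rfl
    have hBτ : B τ = A := Finset.eq_of_subset_of_card_le (hBsub τ) (by rw [hτcard, hA])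
    have hMτ : M (P τ) ∩ (↑A : Set (Fin n)) = ↑A := by rw [← hB, hBτ]
    have hτnot : ∀ u : Fin n → ℕ, deg u = D → supp u ⊆ (↑A : Set (Fin n)) → u ≠ P τ →
        τ ∉ M u ∩ (↑A : Set (Fin n)) := by
      intro u hdu hsu hne hmem
      have huτ : u τ < D := by
        have h1' : u τ ≤ D := hdu ▸ coord_le_deg u τ
        rcases lt_or_eq_of_le h1' with h | h
        · exact h
        · exact absurd (by
            have h2' := eq_single_of_deg_eq (u := u) (k := τ) (by omega)
            rw [h] at h2'
            exact h2') hne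
      refine disj u (P τ) hdu hsu (hdegP τ) (hsuppPA τ hτA) hne
        (Pi.single τ (D - u τ)) (fun i => if i = τ then 0 else u i) ?_ ?_ ?_
      · intro i hi
        have h := supp_single_subset τ (D - u τ) hi
        simp only [Set.mem_singleton_iff] at h
        subst h
        exact hmem
      · intro i hi
        simp only [supp, Set.mem_setOf_eq] at hi
        by_cases h : i = τ
        · simp [h] at hi
        · simp only [if_neg h] at hi
          rw [hMτ]
          exact hsu hi
      · funext i
        simp only [Pi.add_apply, hP, Pi.single_apply]
        rcases eq_or_ne i τ with rfl | h
        · rw [if_pos rfl, if_pos rfl, if_pos rfl]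
          omega
        · rw [if_neg h, if_neg h, if_neg h]
          omega
    set A' : Finset (Fin n) := A.erase τ with hA'def
    have hA' : A'.card = c := by
      rw [hA'def, Finset.card_erase_of_mem hτA, hA]
      omega
    have hA'sub : (↑A' : Set (Fin n)) ⊆ ↑A := by
      intro x hx
      simp only [hA'def, Finset.coe_erase, Set.mem_diff] at hx
      exact hx.1
    have hτA' : τ ∉ A' := Finset.notMem_erase τ A
    have hmemA' : ∀ x, x ∈ A → x ≠ τ → x ∈ A' :=
      fun x hx hxτ => Finset.mem_erase.mpr ⟨hxτ, hx⟩
    have hD' : 0 < D := hD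
    have slice : ∀ a : ℕ, a < D → ∃ e : ℕ → Fin n,
        (∀ i, i < c → ∀ j, j < c → e i = e j → i = j) ∧
        (∀ x, x ∈ A' ↔ ∃ i, i < c ∧ e i = x) ∧
        (∀ v : Fin n → ℕ, deg v = D - a → supp v ⊆ ↑A' → ∀ j, j < c →
           (v (e j) ≠ 0 ∧ ∀ i, i < j → v (e i) = 0) →
           M (v + Pi.single τ a) ∩ ↑A' = {x : Fin n | ∃ i ≤ j, x = e i}) := by
      intro a ha
      have hlift : ∀ u' : Fin n → ℕ, deg u' = D - a → supp u' ⊆ ↑A' →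
          deg (u' + Pi.single τ a) = D ∧
          supp (u' + Pi.single τ a) ⊆ (↑A : Set (Fin n)) := by
        intro u' hd hs
        constructor
        · rw [deg_add, deg_single, hd]; omega
        · intro i hi
          rcases supp_add_subset u' (Pi.single τ a) hi with h | h
          · exact hA'sub (hs h)
          · have h' := supp_single_subset τ a h
            simp only [Set.mem_singleton_iff] at h'
            subst h'; exact hτA
      refine IH c (by omega) A' hA' (D - a) (by omega)
        (fun v => M (v + Pi.single τ a)) ?_ ?_ ?_
      · -- covering
        intro w' hsw' hdw'
        have hw'τ : w' τ = 0 := by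
          by_contra h
          exact hτA' (hsw' h)
        obtain ⟨u, v, hdu, hsu, hsv, hw⟩ := cov (w' + Pi.single τ a)
          (by
            intro i hi
            rcases supp_add_subset w' (Pi.single τ a) hi with h | h
            · exact hA'sub (hsw' h)
            · have h' := supp_single_subset τ a h
              simp only [Set.mem_singleton_iff] at h'
              subst h'; exact hτA)
          (by rw [deg_add, deg_single]; omega)
        have huPτ : u ≠ P τ := by
          intro he
          have h := congrFun hw τ
          simp only [Pi.add_apply, Pi.single_eq_same, hw'τ, he, hPk] at h
          omega
        have hvτ : v τ = 0 := by
          by_contra h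
          exact hτnot u hdu hsu huPτ (hsv h)
        have huτ : u τ = a := by
          have h := congrFun hw τ
          simp only [Pi.add_apply, Pi.single_eq_same, hw'τ, hvτ] at h
          omega
        have hdec : (fun i => if i = τ then 0 else u i) + Pi.single τ a = u := by
          funext i
          simp only [Pi.add_apply, Pi.single_apply]
          rcases eq_or_ne i τ with rfl | h
          · rw [if_pos rfl, if_pos rfl]; omega
          · rw [if_neg h, if_neg h]; omega
        refine ⟨fun i => if i = τ then 0 else u i, v, ?_, ?_, ?_, ?_⟩
        · have h := deg_add (fun i => if i = τ then 0 else u i) (Pi.single τ a)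
          rw [hdec, hdu, deg_single] at h
          omega
        · intro i hi
          simp only [supp, Set.mem_setOf_eq] at hi
          by_cases h : i = τ
          · rw [if_pos h] at hi; exact absurd rfl hi
          · rw [if_neg h] at hi
            exact hmemA' i (hsu hi) h
        · intro i hi
          have h1i := hsv hi
          have hiτ : i ≠ τ := by
            intro he; subst he
            simp only [supp, Set.mem_setOf_eq] at hi
            exact hi hvτ
          show i ∈ M ((fun i => if i = τ then 0 else u i) + Pi.single τ a) ∩ (↑A' : Set (Fin n))
          rw [hdec]
          exact ⟨h1i.1, hmemA' i h1i.2 hiτ⟩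
        · funext i
          have h := congrFun hw i
          simp only [Pi.add_apply, Pi.single_apply] at h ⊢
          rcases eq_or_ne i τ with rfl | hiτ
          · rw [if_pos rfl]
            omega
          · rw [if_neg hiτ]
            rw [if_neg hiτ] at h
            omega
      · -- disjointness
        intro u₁ u₂ hd1 hs1 hd2 hs2 hne v₁ v₂ hv1 hv2 heq
        obtain ⟨hl1, hl1s⟩ := hlift u₁ hd1 hs1
        obtain ⟨hl2, hl2s⟩ := hlift u₂ hd2 hs2
        refine disj (u₁ + Pi.single τ a) (u₂ + Pi.single τ a) hl1 hl1s hl2 hl2s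
          (fun he => hne (by
            funext i
            have h := congrFun he i
            simp only [Pi.add_apply] at h
            omega)) v₁ v₂ ?_ ?_ ?_
        · intro i hi; exact ⟨(hv1 hi).1, hA'sub (hv1 hi).2⟩
        · intro i hi; exact ⟨(hv2 hi).1, hA'sub (hv2 hi).2⟩
        · funext i
          have h := congrFun heq i
          simp only [Pi.add_apply] at h ⊢
          omega
      · -- chain
        intro u₁ u₂ hd1 hs1 hd2 hs2
        obtain ⟨hl1, hl1s⟩ := hlift u₁ hd1 hs1
        obtain ⟨hl2, hl2s⟩ := hlift u₂ hd2 hs2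
        rcases chain (u₁ + Pi.single τ a) (u₂ + Pi.single τ a) hl1 hl1s hl2 hl2s with h | h
        · left; intro x hx; exact ⟨(h ⟨hx.1, hA'sub hx.2⟩).1, hx.2⟩
        · right; intro x hx; exact ⟨(h ⟨hx.1, hA'sub hx.2⟩).1, hx.2⟩
    choose es hinj himg hform using slice
    have hsegset : ∀ (f : ℕ → Fin n) (j : ℕ),
        (↑((Finset.range (j+1)).image f) : Set (Fin n)) = {x : Fin n | ∃ i ≤ j, x = f i} := by
      intro f j
      ext x
      simp only [Finset.coe_image, Finset.coe_range, Set.mem_image, Set.mem_Iio,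
        Set.mem_setOf_eq]
      constructor
      · rintro ⟨i, hi, rfl⟩; exact ⟨i, by omega, rfl⟩
      · rintro ⟨i, hi, rfl⟩; exact ⟨i, by omega, rfl⟩
    have hsegcard : ∀ a, ∀ ha : a < D, ∀ j, j < c →
        ((Finset.range (j+1)).image (es a ha)).card = j + 1 := by
      intro a ha j hj
      rw [Finset.card_image_of_injOn, Finset.card_range]
      intro i hi i' hi' he
      simp only [Finset.coe_range, Set.mem_Iio] at hi hi'
      exact hinj a ha i (by omega) i' (by omega) he
    have hseg : ∀ a, ∀ ha : a < D, ∀ j, j < c →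
        ∃ k, k ∈ A ∧ {x : Fin n | ∃ i ≤ j, x = es a ha i} = ↑(B k) := by
      intro a ha j hj
      have hkj : es a ha j ∈ A' := (himg a ha (es a ha j)).mpr ⟨j, hj, rfl⟩
      have hkjτ : es a ha j ≠ τ := fun h => hτA' (h ▸ hkj)
      have hform' := hform a ha (Pi.single (es a ha j) (D - a)) (deg_single _ _)
        (fun i hi => by
          have h := supp_single_subset (es a ha j) (D - a) hi
          simp only [Set.mem_singleton_iff] at h
          subst h; exact hkj)
        j hj
        ⟨by rw [Pi.single_eq_same]; omega,
         fun i hi => by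
          have hne : es a ha i ≠ es a ha j := fun he => by
            have := hinj a ha i (by omega) j hj he
            omega
          simp only [Pi.single_apply, if_neg hne]⟩
      set u : Fin n → ℕ := Pi.single (es a ha j) (D - a) + Pi.single τ a with hu
      have hdu : deg u = D := by rw [hu, deg_add, deg_single, deg_single]; omega
      have hsu : supp u ⊆ (↑A : Set (Fin n)) := by
        intro i hi
        rcases supp_add_subset _ _ hi with h | h
        · have h' := supp_single_subset _ _ h
          simp only [Set.mem_singleton_iff] at h'
          subst h'; exact hA'sub hkj
        · have h' := supp_single_subset _ _ h
          simp only [Set.mem_singleton_iff] at h'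
          subst h'; exact hτA
      have huPτ : u ≠ P τ := by
        intro he
        have h := congrFun he (es a ha j)
        simp only [hu, Pi.add_apply, Pi.single_eq_same, Pi.single_apply,
          if_neg hkjτ, hP] at h
        omega
      have hτu : τ ∉ M u ∩ (↑A : Set (Fin n)) := hτnot u hdu hsu huPτ
      have hA'A : M u ∩ (↑A : Set (Fin n)) = M u ∩ ↑A' := by
        ext x
        constructor
        · rintro ⟨h1x, h2x⟩
          have hxτ : x ≠ τ := fun he => hτu (he ▸ ⟨h1x, h2x⟩)
          exact ⟨h1x, hmemA' x h2x hxτ⟩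
        · rintro ⟨h1x, h2x⟩
          exact ⟨h1x, hA'sub h2x⟩
      rcases hflag u hdu hsu with hemp | ⟨k, hk, hke⟩
      · exfalso
        have hmem : es a ha j ∈ M u ∩ (↑A' : Set (Fin n)) := by
          rw [hform']
          exact ⟨j, le_rfl, rfl⟩
        have hmem2 : es a ha j ∈ M u ∩ (↑A : Set (Fin n)) := ⟨hmem.1, hA'sub hmem.2⟩
        rw [hemp] at hmem2
        exact hmem2
      · refine ⟨k, hk, ?_⟩
        rw [← hform', ← hA'A]
        exact hke
    have hsegeq : ∀ a, ∀ ha : a < D, ∀ j, j < c →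
        {x : Fin n | ∃ i ≤ j, x = es a ha i} = {x : Fin n | ∃ i ≤ j, x = es 0 hD' i} := by
      intro a ha j hj
      obtain ⟨k1, hk1, he1⟩ := hseg a ha j hj
      obtain ⟨k2, hk2, he2⟩ := hseg 0 hD' j hj
      have hcard1 : (B k1).card = j + 1 := by
        have h := hsegset (es a ha) j
        rw [he1] at h
        rw [← Finset.coe_injective h, hsegcard a ha j hj]
      have hcard2 : (B k2).card = j + 1 := by
        have h := hsegset (es 0 hD') j
        rw [he2] at h
        rw [← Finset.coe_injective h, hsegcard 0 hD' j hj]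
      have hkk : k1 = k2 := hBinj k1 hk1 k2 hk2 (by rw [hcard1, hcard2])
      rw [he1, he2, hkk]
    have hmatch : ∀ a, ∀ ha : a < D, ∀ j, j < c → es a ha j = es 0 hD' j := by
      intro a ha j hj
      have h1 : es a ha j ∈ {x : Fin n | ∃ i ≤ j, x = es 0 hD' i} := by
        rw [← hsegeq a ha j hj]
        exact ⟨j, le_rfl, rfl⟩
      obtain ⟨i, hij, hei⟩ := h1
      rcases eq_or_ne i j with rfl | hij'
      · exact hei
      · exfalso
        have hi' : i < j := lt_of_le_of_ne hij hij'
        have h2 : es 0 hD' i ∈ {x : Fin n | ∃ i' ≤ i, x = es a ha i'} := by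
          rw [hsegeq a ha i (by omega)]
          exact ⟨i, le_rfl, rfl⟩
        obtain ⟨l, hl, hel⟩ := h2
        have := hinj a ha j hj l (by omega) (by rw [hei, hel])
        omega
    set e : ℕ → Fin n := fun i => if i < c then es 0 hD' i else τ with hedef
    have he_lt : ∀ i, i < c → e i = es 0 hD' i := by
      intro i hi; simp only [hedef]; rw [if_pos hi]
    have he_ge : ∀ i, ¬ i < c → e i = τ := by
      intro i hi; simp only [hedef]; rw [if_neg hi]
    refine ⟨e, ?_, ?_, ?_⟩
    · -- injectivity
      intro i hi j hj he
      by_cases hic : i < c <;> by_cases hjc : j < c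
      · rw [he_lt i hic, he_lt j hjc] at he
        exact hinj 0 hD' i hic j hjc he
      · exfalso
        rw [he_lt i hic, he_ge j hjc] at he
        exact hτA' (he ▸ (himg 0 hD' (es 0 hD' i)).mpr ⟨i, hic, rfl⟩)
      · exfalso
        rw [he_ge i hic, he_lt j hjc] at he
        exact hτA' (he.symm ▸ (himg 0 hD' (es 0 hD' j)).mpr ⟨j, hjc, rfl⟩)
      · omega
    · -- image
      intro x
      constructor
      · intro hx
        by_cases hxτ : x = τ
        · exact ⟨c, by omega, by rw [he_ge c (lt_irrefl c), hxτ]⟩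
        · obtain ⟨i, hi, hei⟩ := (himg 0 hD' x).mp (hmemA' x hx hxτ)
          exact ⟨i, by omega, by rw [he_lt i hi, hei]⟩
      · rintro ⟨i, hi, rfl⟩
        by_cases hic : i < c
        · rw [he_lt i hic]
          exact Finset.mem_of_mem_erase ((himg 0 hD' (es 0 hD' i)).mpr ⟨i, hic, rfl⟩)
        · rw [he_ge i hic]
          exact hτA
    · -- the formula
      intro u hdu hsu j hj ⟨hj1, hj2⟩
      by_cases hjc : j < c
      · -- case j < c : slice argument
        rw [he_lt j hjc] at hj1
        have hejA' : es 0 hD' j ∈ A' := (himg 0 hD' _).mpr ⟨j, hjc, rfl⟩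
        have hejτ : es 0 hD' j ≠ τ := fun h => hτA' (h ▸ hejA')
        have haD : u τ < D := by
          have h := pair_le_deg u (Ne.symm hejτ)
          rw [hdu] at h
          omega
        have hdec : (fun i => if i = τ then 0 else u i) + Pi.single τ (u τ) = u := by
          funext i
          simp only [Pi.add_apply, Pi.single_apply]
          rcases eq_or_ne i τ with rfl | h
          · rw [if_pos rfl, if_pos rfl]; omega
          · rw [if_neg h, if_neg h]; omega
        have hdv : deg (fun i => if i = τ then 0 else u i) = D - u τ := by
          have h := deg_add (fun i => if i = τ then 0 else u i) (Pi.single τ (u τ))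
          rw [hdec, hdu, deg_single] at h
          omega
        have hsv : supp (fun i => if i = τ then 0 else u i) ⊆ (↑A' : Set (Fin n)) := by
          intro i hi
          simp only [supp, Set.mem_setOf_eq] at hi
          by_cases h : i = τ
          · rw [if_pos h] at hi; exact absurd rfl hi
          · rw [if_neg h] at hi
            exact hmemA' i (hsu hi) h
        have hform' := hform (u τ) haD (fun i => if i = τ then 0 else u i) hdv hsv j hjc
          ⟨by
            rw [hmatch (u τ) haD j hjc]
            simp only [if_neg hejτ]
            exact hj1,
           fun i hi => by
            have heiA' : es 0 hD' i ∈ A' := (himg 0 hD' _).mpr ⟨i, by omega, rfl⟩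
            have heiτ : es 0 hD' i ≠ τ := fun h => hτA' (h ▸ heiA')
            rw [hmatch (u τ) haD i (by omega)]
            simp only [if_neg heiτ]
            have h := hj2 i hi
            rw [he_lt i (by omega)] at h
            exact h⟩
        rw [hdec] at hform'
        have huPτ : u ≠ P τ := by
          intro he
          apply hj1
          rw [he]
          simp only [hP, Pi.single_apply, if_neg hejτ]
        have hA'A : M u ∩ (↑A : Set (Fin n)) = M u ∩ ↑A' := by
          ext x
          constructor
          · rintro ⟨h1x, h2x⟩
            have hxτ : x ≠ τ := fun he => hτnot u hdu hsu huPτ (he ▸ ⟨h1x, h2x⟩)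
            exact ⟨h1x, hmemA' x h2x hxτ⟩
          · rintro ⟨h1x, h2x⟩
            exact ⟨h1x, hA'sub h2x⟩
        rw [hA'A, hform']
        ext x
        simp only [Set.mem_setOf_eq]
        constructor
        · rintro ⟨i, hij, rfl⟩
          exact ⟨i, hij, by rw [he_lt i (by omega), hmatch (u τ) haD i (by omega)]⟩
        · rintro ⟨i, hij, rfl⟩
          exact ⟨i, hij, by rw [he_lt i (by omega), hmatch (u τ) haD i (by omega)]⟩
      · -- case j = c : u is the pure power of τ
        have hjc' : j = c := by omega
        have hsuppu : ∀ i : Fin n, i ≠ τ → u i = 0 := by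
          intro i hiτ
          by_contra h
          have hiA : i ∈ A := hsu h
          obtain ⟨i', hi', hei'⟩ := (himg 0 hD' i).mp (hmemA' i hiA hiτ)
          have h2 := hj2 i' (by omega)
          rw [he_lt i' hi', hei'] at h2
          exact h h2
        have hdegτ : deg u = u τ := by
          rw [deg, Finset.sum_eq_single τ]
          · intro b _ hb; exact hsuppu b hb
          · intro h; exact absurd (Finset.mem_univ τ) h
        have huP : u = P τ := by
          have h := eq_single_of_deg_eq hdegτ
          have h2 : u τ = D := by omega
          rw [h2] at h
          exact h
        rw [huP, hMτ]
        ext x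
        simp only [Set.mem_setOf_eq, Finset.mem_coe]
        constructor
        · intro hx
          by_cases hxτ : x = τ
          · exact ⟨c, by omega, by rw [he_ge c (lt_irrefl c), hxτ]⟩
          · obtain ⟨i, hi, hei⟩ := (himg 0 hD' x).mp (hmemA' x hx hxτ)
            exact ⟨i, by omega, by rw [he_lt i hi, hei]⟩
        · rintro ⟨i, hij, rfl⟩
          by_cases hic : i < c
          · rw [he_lt i hic]
            exact Finset.mem_of_mem_erase ((himg 0 hD' (es 0 hD' i)).mpr ⟨i, hic, rfl⟩)
          · rw [he_ge i hic]
            exact hτA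

/-- Let `L` be a relative involutive division on `U = T_D` whose multiplicative
sets form a chain under inclusion. Then there is a permutation `σ` of the
variables such that `L` is the Pommaret division for the ordering
`x_{σ 0} < x_{σ 1} < ...`: for every `u ∈ U`, if `j` is the least index with
`u (σ j) ≠ 0`, then `M u = {σ i | i ≤ j}`. -/
theorem chain_division_is_pommaret (n D : ℕ) (hn : 1 ≤ n) (hD : 1 ≤ D)
    (M : (Fin n → ℕ) → Set (Fin n))
    (hcov : (⋃ u ∈ {u : Fin n → ℕ | deg u = D}, cone M u) =
      {w : Fin n → ℕ | D ≤ deg w})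
    (hdisj : ∀ u v : Fin n → ℕ, deg u = D → deg v = D → u ≠ v →
      cone M u ∩ cone M v = ∅)
    (hchain : ∀ u v : Fin n → ℕ, deg u = D → deg v = D →
      M u ⊆ M v ∨ M v ⊆ M u) :
    ∃ σ : Equiv.Perm (Fin n),
      ∀ u : Fin n → ℕ, deg u = D →
        ∀ j : Fin n, (u (σ j) ≠ 0 ∧ ∀ i < j, u (σ i) = 0) →
          M u = {x : Fin n | ∃ i ≤ j, x = σ i} := by
  have huniv : (Finset.univ : Finset (Fin n)).card = n := by simp
  obtain ⟨e, hinj, himg, hform⟩ := aux n hn n Finset.univ huniv D hD M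
    (by
      intro w hsw hdw
      have hw : w ∈ {w : Fin n → ℕ | D ≤ deg w} := hdw
      rw [← hcov] at hw
      simp only [Set.mem_iUnion, Set.mem_setOf_eq] at hw
      obtain ⟨u, hu, v, hsv, rfl⟩ := hw
      exact ⟨u, v, hu, by simp, fun i hi => ⟨hsv hi, by simp⟩, rfl⟩)
    (by
      intro u₁ u₂ hd1 _ hd2 _ hne v₁ v₂ hv1 hv2 heq
      have h := hdisj u₁ u₂ hd1 hd2 hne
      rw [Set.eq_empty_iff_forall_notMem] at h
      exact h (u₁ + v₁) ⟨⟨v₁, fun i hi => (hv1 hi).1, rfl⟩, ⟨v₂, fun i hi => (hv2 hi).1, heq⟩⟩)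
    (by
      intro u₁ u₂ hd1 _ hd2 _
      rcases hchain u₁ u₂ hd1 hd2 with h | h
      · exact Or.inl (Set.inter_subset_inter_left _ h)
      · exact Or.inr (Set.inter_subset_inter_left _ h))
  have hfinj : Function.Injective (fun i : Fin n => e i.val) := by
    intro i j hij
    exact Fin.ext (hinj i.val i.isLt j.val j.isLt hij)
  have hfbij : Function.Bijective (fun i : Fin n => e i.val) :=
    Finite.injective_iff_bijective.mp hfinj
  refine ⟨Equiv.ofBijective _ hfbij, ?_⟩
  intro u hdu j ⟨hj1, hj2⟩
  have hσ : ∀ i : Fin n, Equiv.ofBijective _ hfbij i = e i.val := fun i => rfl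
  have hres := hform u hdu (by simp) j.val j.isLt
    ⟨by rw [← hσ j]; exact hj1,
     fun i hi => by
      have h := hj2 ⟨i, by omega⟩ (by rw [Fin.lt_def]; exact hi)
      rw [hσ] at h
      exact h⟩
  rw [Finset.coe_univ, Set.inter_univ] at hres
  rw [hres]
  ext x
  simp only [Set.mem_setOf_eq]
  constructor
  · rintro ⟨i, hij, rfl⟩
    exact ⟨⟨i, by omega⟩, by rw [Fin.le_def]; exact hij, (hσ ⟨i, by omega⟩).symm⟩
  · rintro ⟨i, hij, rfl⟩
    rw [hσ]
    exact ⟨i.val, by rw [Fin.le_def] at hij; exact hij, rfl⟩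
end

section
/- Let U = T_D and let L be a relative involutive division on U. Let N ⊆ U and set H = (⋃_{l ∈ N} C(l)) ∪ { v | deg(v) < D }. Then H is an order ideal (i.e. downward closed under divisibility: w ∈ H and v divides w imply v ∈ H) if and only if N is revenant, i.e. for all t, s ∈ U with t ∈ N and lcm(t,s) ∈ C(t), one has s ∈ N. -/
lemma deg_mono {n : ℕ} {u v : Fin n → ℕ} (h : ∀ i, u i ≤ v i) : deg u ≤ deg v :=
  Finset.sum_le_sum fun i _ => h i

/-- Let `L` be a relative involutive division on `U = T_D` and `N ⊆ U`. The set
`H = (⋃_{l ∈ N} C(l)) ∪ {v | deg v < D}` is an order ideal (downward closed under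
divisibility, i.e. pointwise `≤`) iff `N` is revenant: for all `t, s ∈ U` with
`t ∈ N` and `lcm(t,s) ∈ C(t)`, one has `s ∈ N`. -/
theorem orderIdeal_iff_revenant (n D : ℕ) (hn : 1 ≤ n) (hD : 1 ≤ D)
    (M : (Fin n → ℕ) → Set (Fin n))
    (hcov : (⋃ u ∈ {u : Fin n → ℕ | deg u = D}, cone M u) =
      {w : Fin n → ℕ | D ≤ deg w})
    (hdisj : ∀ u v : Fin n → ℕ, deg u = D → deg v = D → u ≠ v →
      cone M u ∩ cone M v = ∅)
    (N : Set (Fin n → ℕ)) (hN : N ⊆ {u : Fin n → ℕ | deg u = D}) :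
    (∀ w ∈ (⋃ l ∈ N, cone M l) ∪ {v : Fin n → ℕ | deg v < D},
        ∀ v : Fin n → ℕ, (∀ i, v i ≤ w i) →
          v ∈ (⋃ l ∈ N, cone M l) ∪ {v : Fin n → ℕ | deg v < D}) ↔
      (∀ t ∈ N, ∀ s : Fin n → ℕ, deg s = D → (t ⊔ s) ∈ cone M t → s ∈ N) := by
  constructor
  · intro hOI t ht s hs hlcm
    have hw : (t ⊔ s) ∈ (⋃ l ∈ N, cone M l) ∪ {v : Fin n → ℕ | deg v < D} :=
      Or.inl (Set.mem_biUnion ht hlcm)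
    have hsmem := hOI _ hw s (fun i => le_sup_right)
    rcases hsmem with h | h
    · rcases Set.mem_iUnion₂.mp h with ⟨l, hl, v, hv, hsv⟩
      have hdl : deg l = D := hN hl
      have hdv : deg v = 0 := by
        have := congrArg deg hsv
        rw [deg_add, hdl, hs] at this
        omega
      have hv0 : v = 0 := by
        funext i
        have := (Finset.sum_eq_zero_iff.mp hdv) i (Finset.mem_univ i)
        simpa using this
      rw [hv0] at hsv
      simpa [hsv] using hl
    · exact absurd h (by simp [hs])
  · intro hrev w hw v hv
    by_cases hdv : deg v < D
    · exact Or.inr hdv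
    push_neg at hdv
    rcases hw with h | h
    · rcases Set.mem_iUnion₂.mp h with ⟨t, ht, a, ha, hwa⟩
      have hvs : v ∈ ⋃ u ∈ {u : Fin n → ℕ | deg u = D}, cone M u := by
        rw [hcov]; exact hdv
      rcases Set.mem_iUnion₂.mp hvs with ⟨s, hsD, b, hb, hvb⟩
      have hdegt : deg t = D := hN ht
      -- t ⊔ s ∈ cone M t
      have hlcm : (t ⊔ s) ∈ cone M t := by
        refine ⟨fun i => s i - t i, ?_, ?_⟩
        · intro i hi
          have hsi : t i < s i := by
            simp only [supp, Set.mem_setOf_eq] at hi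
            omega
          have h1 : s i ≤ v i := by rw [hvb]; simp
          have h2 : v i ≤ t i + a i := by rw [hwa] at hv; simpa using hv i
          have : a i ≠ 0 := by omega
          exact ha this
        · funext i
          simp only [Pi.sup_apply, Pi.add_apply]
          omega
      have hsN : s ∈ N := hrev t ht s hsD hlcm
      exact Or.inl (Set.mem_biUnion hsN ⟨b, hb, hvb⟩)
    · have : deg w < D := h
      have : deg v ≤ deg w := deg_mono hv
      omega
end

section
/- Let U = T_D (D ≥ 1) and define the Pommaret assignment of multiplicative variables on U: for u ∈ U, M_P(u) = { i | i ≤ min(u) }, where min(u) is the least index j with u(j) ≠ 0. Then Pommaret is a relative involutive division on U: the cones C(u), u ∈ U, are pairwise disjoint and their union equals { w | deg(w) ≥ D }. In fact, every w with deg(w) ≥ D lies in exactly one Pommaret cone. -/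
namespace PomAux

/-- tail sum from index `k` -/
def tl {n : ℕ} (w : Fin n → ℕ) (k : ℕ) : ℕ :=
  ∑ i : Fin n, if k ≤ (i : ℕ) then w i else 0

lemma tl_zero {n : ℕ} (w : Fin n → ℕ) : tl w 0 = deg w := by
  simp [tl, deg]

lemma tl_n {n : ℕ} (w : Fin n → ℕ) : tl w n = 0 := by
  apply Finset.sum_eq_zero
  intro i _
  rw [if_neg (Nat.not_le.mpr i.isLt)]

lemma tl_anti {n : ℕ} (w : Fin n → ℕ) {k k' : ℕ} (h : k ≤ k') :
    tl w k' ≤ tl w k := by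
  apply Finset.sum_le_sum
  intro i _
  split_ifs <;> omega

lemma tl_step {n : ℕ} (w : Fin n → ℕ) (k : Fin n) :
    tl w k = w k + tl w ((k : ℕ) + 1) := by
  unfold tl
  have : ∀ i : Fin n, (if (k : ℕ) ≤ (i : ℕ) then w i else 0) =
      (if i = k then w i else 0) + (if (k : ℕ) + 1 ≤ (i : ℕ) then w i else 0) := by
    intro i
    by_cases hik : i = k
    · subst hik; simp
    · have hne : (i : ℕ) ≠ (k : ℕ) := fun h => hik (Fin.ext h)
      rw [if_neg hik]
      split_ifs <;> omega
  rw [Finset.sum_congr rfl (fun i _ => this i), Finset.sum_add_distrib,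
    Finset.sum_ite_eq' Finset.univ k, if_pos (Finset.mem_univ k)]

lemma tl_add {n : ℕ} (u v : Fin n → ℕ) (k : ℕ) :
    tl (u + v) k = tl u k + tl v k := by
  unfold tl
  rw [← Finset.sum_add_distrib]
  apply Finset.sum_congr rfl
  intro i _
  split_ifs <;> simp

lemma cross_unique {n : ℕ} (w : Fin n → ℕ) {D a b : ℕ}
    (ha1 : tl w (a + 1) < D) (ha2 : D ≤ tl w a)
    (hb1 : tl w (b + 1) < D) (hb2 : D ≤ tl w b) : a = b := by
  rcases lt_trichotomy a b with h | h | h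
  · have := tl_anti w (show a + 1 ≤ b by omega)
    omega
  · exact h
  · have := tl_anti w (show b + 1 ≤ a by omega)
    omega

/-- characterization of a divisor -/
lemma char {n D : ℕ} (hD : 1 ≤ D) {M : (Fin n → ℕ) → Set (Fin n)}
    (hM : ∀ u : Fin n → ℕ, deg u = D →
      ∀ j : Fin n, (u j ≠ 0 ∧ ∀ i < j, u i = 0) → M u = {i : Fin n | i ≤ j})
    {u w : Fin n → ℕ} (hu : deg u = D) (hw : w ∈ cone M u) :
    ∃ j : Fin n, (tl w ((j : ℕ) + 1) < D ∧ D ≤ tl w (j : ℕ)) ∧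
      (∀ i : Fin n, (j : ℕ) < (i : ℕ) → u i = w i) ∧
      (∀ i : Fin n, (i : ℕ) < (j : ℕ) → u i = 0) ∧
      u j = D - tl w ((j : ℕ) + 1) := by
  obtain ⟨v, hv, rfl⟩ := hw
  set s := Finset.univ.filter (fun i => u i ≠ 0) with hs
  have hsne : s.Nonempty := by
    rw [Finset.filter_nonempty_iff]
    by_contra h
    push_neg at h
    have : deg u = 0 := Finset.sum_eq_zero (fun i hi => h i hi)
    omega
  set j := s.min' hsne with hjdef
  have hj : u j ≠ 0 := (Finset.mem_filter.mp (s.min'_mem hsne)).2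
  have hzero : ∀ i, i < j → u i = 0 := by
    intro i hij
    by_contra h
    have : j ≤ i := s.min'_le i (by simp [hs, h])
    exact absurd hij (not_lt.mpr this)
  have hMu : M u = {i : Fin n | i ≤ j} := hM u hu j ⟨hj, hzero⟩
  have hvz : ∀ i : Fin n, (j : ℕ) < (i : ℕ) → v i = 0 := by
    intro i hi
    by_contra h
    have : i ∈ M u := hv h
    rw [hMu] at this
    have : (i : ℕ) ≤ (j : ℕ) := this
    omega
  have h1 : tl u (j : ℕ) = deg u := by
    unfold tl deg
    apply Finset.sum_congr rfl
    intro i _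
    split_ifs with h
    · rfl
    · exact (hzero i (Fin.lt_def.mpr (by omega))).symm
  have h2 : tl u (j : ℕ) = u j + tl u ((j : ℕ) + 1) := tl_step u j
  have h4 : tl v ((j : ℕ) + 1) = 0 := by
    apply Finset.sum_eq_zero
    intro i _
    split_ifs with h
    · exact hvz i (by omega)
    · rfl
  have hujle : u j ≤ deg u := Finset.single_le_sum (fun i _ => Nat.zero_le _)
    (Finset.mem_univ j)
  have hT : tl (u + v) ((j : ℕ) + 1) = D - u j := by
    rw [tl_add, h4]
    omega
  refine ⟨j, ⟨?_, ?_⟩, ?_, ?_, ?_⟩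
  · rw [hT]; omega
  · rw [tl_step (u + v) j, hT]
    have : (u + v) j = u j + v j := rfl
    omega
  · intro i hi
    have : (u + v) i = u i + v i := rfl
    rw [this, hvz i hi]
    omega
  · exact fun i hi => hzero i (Fin.lt_def.mpr hi)
  · rw [hT]; omega

lemma uniq {n D : ℕ} (hD : 1 ≤ D) {M : (Fin n → ℕ) → Set (Fin n)}
    (hM : ∀ u : Fin n → ℕ, deg u = D →
      ∀ j : Fin n, (u j ≠ 0 ∧ ∀ i < j, u i = 0) → M u = {i : Fin n | i ≤ j})
    {u u' w : Fin n → ℕ} (hu : deg u = D) (hu' : deg u' = D)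
    (hw : w ∈ cone M u) (hw' : w ∈ cone M u') : u = u' := by
  obtain ⟨j, ⟨hc1, hc2⟩, ha, hb, hc⟩ := char hD hM hu hw
  obtain ⟨j', ⟨hc1', hc2'⟩, ha', hb', hc'⟩ := char hD hM hu' hw'
  have hjj : (j' : ℕ) = (j : ℕ) := cross_unique w hc1' hc2' hc1 hc2
  have hjeq : j' = j := Fin.ext hjj
  rw [hjeq] at ha' hb' hc'
  funext i
  rcases lt_trichotomy ((i : ℕ)) ((j : ℕ)) with h | h | h
  · rw [hb i h, hb' i h]
  · have : i = j := Fin.ext h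
    subst this
    rw [hc, hc']
  · rw [ha i h, ha' i h]

lemma ex {n D : ℕ} (hD : 1 ≤ D) {M : (Fin n → ℕ) → Set (Fin n)}
    (hM : ∀ u : Fin n → ℕ, deg u = D →
      ∀ j : Fin n, (u j ≠ 0 ∧ ∀ i < j, u i = 0) → M u = {i : Fin n | i ≤ j})
    {w : Fin n → ℕ} (hw : D ≤ deg w) :
    ∃ u : Fin n → ℕ, deg u = D ∧ w ∈ cone M u := by
  have hn : 1 ≤ n := by
    by_contra h
    interval_cases n
    · simp [deg] at hw; omega
  have hPn : tl w n < D := by rw [tl_n]; omega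
  have hex : ∃ k, tl w k < D := ⟨n, hPn⟩
  set m := Nat.find hex with hm
  have hm1 : tl w m < D := Nat.find_spec hex
  have hm0 : m ≠ 0 := by
    intro h
    rw [h, tl_zero] at hm1
    omega
  have hmn : m ≤ n := Nat.find_le hPn
  set j := m - 1 with hjdef
  have hjn : j < n := by omega
  have hj1 : tl w (j + 1) < D := by
    have : j + 1 = m := by omega
    rw [this]; exact hm1
  have hj2 : D ≤ tl w j := by
    have := Nat.find_min hex (show j < m by omega)
    omega
  set jF : Fin n := ⟨j, hjn⟩ with hjF
  set u : Fin n → ℕ := fun i =>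
    if j + 1 ≤ (i : ℕ) then w i else if (i : ℕ) = j then D - tl w (j + 1) else 0
    with hudef
  have hvF : (jF : ℕ) = j := rfl
  have hujF : u jF = D - tl w (j + 1) := by
    show (if j + 1 ≤ (jF : ℕ) then w jF else
      if (jF : ℕ) = j then D - tl w (j + 1) else 0) = D - tl w (j + 1)
    rw [if_neg (by rw [hvF]; omega), if_pos hvF]
  have huzero : ∀ i : Fin n, (i : ℕ) < j → u i = 0 := by
    intro i hi
    rw [hudef]
    simp only
    rw [if_neg (by omega), if_neg (by omega)]
  have huw : ∀ i : Fin n, j + 1 ≤ (i : ℕ) → u i = w i := by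
    intro i hi
    rw [hudef]
    simp only
    rw [if_pos hi]
  have hdegu : deg u = D := by
    have hcongr : ∀ i : Fin n, u i =
        (if i = jF then D - tl w (j + 1) else 0) +
        (if j + 1 ≤ (i : ℕ) then w i else 0) := by
      intro i
      by_cases h1 : j + 1 ≤ (i : ℕ)
      · rw [huw i h1, if_pos h1, if_neg (fun he => by
          have : (i : ℕ) = j := congrArg Fin.val he
          omega)]
        omega
      · by_cases h2 : (i : ℕ) = j
        · have : i = jF := Fin.ext h2
          subst this
          rw [hujF, if_pos rfl, if_neg h1]
          omega
        · rw [huzero i (by omega), if_neg (fun he => h2 (congrArg Fin.val he)),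
            if_neg h1]
    unfold deg
    rw [Finset.sum_congr rfl (fun i _ => hcongr i), Finset.sum_add_distrib,
      Finset.sum_ite_eq' Finset.univ jF, if_pos (Finset.mem_univ jF)]
    have : (∑ i : Fin n, if j + 1 ≤ (i : ℕ) then w i else 0) = tl w (j + 1) := rfl
    rw [this]
    omega
  have hMu : M u = {i : Fin n | i ≤ jF} := by
    apply hM u hdegu jF
    refine ⟨by rw [hujF]; omega, ?_⟩
    intro i hi
    exact huzero i (Fin.lt_def.mp hi)
  have hule : ∀ i : Fin n, u i ≤ w i := by
    intro i
    by_cases h1 : j + 1 ≤ (i : ℕ)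
    · rw [huw i h1]
    · by_cases h2 : (i : ℕ) = j
      · have : i = jF := Fin.ext h2
        subst this
        rw [hujF]
        have hstep : tl w (jF : ℕ) = w jF + tl w ((jF : ℕ) + 1) := tl_step w jF
        have : (jF : ℕ) = j := rfl
        rw [this] at hstep
        omega
      · rw [huzero i (by omega)]
        exact Nat.zero_le _
  refine ⟨u, hdegu, fun i => w i - u i, ?_, ?_⟩
  · intro i hi
    rw [hMu]
    show (i : ℕ) ≤ (jF : ℕ)
    by_contra h
    have hj' : j + 1 ≤ (i : ℕ) := by
      have : (jF : ℕ) = j := rfl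
      omega
    exact hi (by simp [huw i hj'])
  · funext i
    have := hule i
    show w i = u i + (w i - u i)
    omega

end PomAux

/-- The Pommaret assignment on `U = T_D` — the multiplicative variables of `u`
are `{i | i ≤ min(u)}`, where `min(u)` is the least index `j` with `u j ≠ 0` —
is a relative involutive division: the cones are pairwise disjoint, their union
is `{w | deg w ≥ D}`, and every `w` of degree `≥ D` lies in exactly one cone. -/
theorem pommaret_is_relative_involutive (n D : ℕ) (hn : 1 ≤ n) (hD : 1 ≤ D)
    (M : (Fin n → ℕ) → Set (Fin n))
    (hM : ∀ u : Fin n → ℕ, deg u = D →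
      ∀ j : Fin n, (u j ≠ 0 ∧ ∀ i < j, u i = 0) → M u = {i : Fin n | i ≤ j}) :
    (∀ u v : Fin n → ℕ, deg u = D → deg v = D → u ≠ v →
        cone M u ∩ cone M v = ∅) ∧
      (⋃ u ∈ {u : Fin n → ℕ | deg u = D}, cone M u) =
        {w : Fin n → ℕ | D ≤ deg w} ∧
      (∀ w : Fin n → ℕ, D ≤ deg w →
        ∃! u : Fin n → ℕ, deg u = D ∧ w ∈ cone M u) := by
  refine ⟨?_, ?_, ?_⟩
  · intro u v hdu hdv hne
    rw [Set.eq_empty_iff_forall_notMem]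
    rintro w ⟨hw1, hw2⟩
    exact hne (PomAux.uniq hD hM hdu hdv hw1 hw2)
  · ext w
    simp only [Set.mem_iUnion, Set.mem_setOf_eq, exists_prop]
    constructor
    · rintro ⟨u, hu, v, _, rfl⟩
      have : deg (u + v) = deg u + deg v := by
        unfold deg
        rw [← Finset.sum_add_distrib]
        rfl
      rw [this]
      omega
    · intro h
      obtain ⟨u, h1, h2⟩ := PomAux.ex hD hM h
      exact ⟨u, h1, h2⟩
  · intro w hw
    obtain ⟨u, h1, h2⟩ := PomAux.ex hD hM hw
    exact ⟨u, ⟨h1, h2⟩, fun u' ⟨h1', h2'⟩ => PomAux.uniq hD hM h1' h1 h2' h2⟩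
end

section
/- Let U = T_D with D ≥ 1. Then the Janet division on U coincides with the Pommaret division on U: for every τ ∈ U, the set of Janet-multiplicative variables of τ with respect to U equals { i | i ≤ min(τ) }, where min(τ) is the least index j with τ(j) ≠ 0. -/
/-- On `U = T_D`, the Janet division coincides with the Pommaret division: for
every `τ ∈ U`, the set of Janet-multiplicative indices of `τ` w.r.t. `U`
(those `j` for which there is no `τ' ∈ U` agreeing with `τ` on all indices `> j`
and with `τ' j > τ j`) equals `{i | i ≤ min(τ)}`, where `min(τ)` is the least
index `jmin` with `τ jmin ≠ 0`. -/
theorem janet_eq_pommaret_on_TD (n D : ℕ) (hn : 1 ≤ n) (hD : 1 ≤ D) :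
    ∀ τ : Fin n → ℕ, deg τ = D →
      ∀ jmin : Fin n, (τ jmin ≠ 0 ∧ ∀ i < jmin, τ i = 0) →
        {j : Fin n | ¬ ∃ τ' : Fin n → ℕ, deg τ' = D ∧
            (∀ i : Fin n, j < i → τ' i = τ i) ∧ τ j < τ' j} =
          {i : Fin n | i ≤ jmin} := by
  intro τ hτ jmin ⟨hne, hmin⟩
  ext j
  simp only [Set.mem_setOf_eq]
  constructor
  · -- if j is multiplicative, then j ≤ jmin; contrapositive
    intro h
    by_contra hj
    push_neg at hj
    -- jmin < j; move τ jmin to position j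
    apply h
    refine ⟨Function.update (Function.update τ jmin 0) j (τ j + τ jmin), ?_, ?_, ?_⟩
    · unfold deg
      rw [Finset.sum_update_of_mem (Finset.mem_univ j)]
      simp only [Finset.sdiff_singleton_eq_erase]
      rw [Finset.sum_update_of_mem (Finset.mem_erase.2 ⟨hj.ne, Finset.mem_univ jmin⟩)]
      simp only [Finset.sdiff_singleton_eq_erase]
      rw [← hτ]
      unfold deg
      rw [← Finset.add_sum_erase _ τ (Finset.mem_univ j),
        ← Finset.add_sum_erase _ τ (Finset.mem_erase.2 ⟨hj.ne, Finset.mem_univ jmin⟩)]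
      ring
    · intro i hji
      rw [Function.update_of_ne hji.ne', Function.update_of_ne (hj.trans hji).ne']
    · rw [Function.update_self]
      omega
  · -- if j ≤ jmin, no such τ' exists
    intro hj ⟨τ', hd', hagree, hlt⟩
    -- sum over {i | j < i} ∪ {j}
    have key : ∀ σ : Fin n → ℕ, σ j + ∑ i ∈ Finset.univ.filter (j < ·), σ i ≤ deg σ := by
      intro σ
      unfold deg
      rw [← Finset.add_sum_erase _ σ (Finset.mem_univ j)]
      refine add_le_add le_rfl (Finset.sum_le_sum_of_subset ?_)
      intro i hi
      simp only [Finset.mem_filter] at hi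
      exact Finset.mem_erase.2 ⟨hi.2.ne', Finset.mem_univ i⟩
    have hτeq : deg τ = τ j + ∑ i ∈ Finset.univ.filter (j < ·), τ i := by
      unfold deg
      rw [← Finset.add_sum_erase _ τ (Finset.mem_univ j)]
      congr 1
      apply (Finset.sum_subset ?_ ?_).symm
      · intro i hi
        simp only [Finset.mem_filter] at hi
        exact Finset.mem_erase.2 ⟨hi.2.ne', Finset.mem_univ i⟩
      · intro i hi hnot
        simp only [Finset.mem_erase, Finset.mem_filter, Finset.mem_univ, true_and,
          not_lt] at hi hnot
        exact hmin i (lt_of_le_of_ne (hnot.trans hj) (by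
          intro h; exact hi.1 (by omega)))
    have h1 := key τ'
    have h2 : ∑ i ∈ Finset.univ.filter (j < ·), τ' i
        = ∑ i ∈ Finset.univ.filter (j < ·), τ i := by
      apply Finset.sum_congr rfl
      intro i hi
      exact hagree i (Finset.mem_filter.mp hi).2
    omega
end
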